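/- arXiv:cond-mat/9609254 — 3 statements merged into one kernel-verified Lean document; each statement's English description precedes it below -/
import Mathlib

section
/- In an inverse semigroup with zero, the set of elements that are minimal among nonzero elements with respect to the natural order is closed under multiplication in the sense: if x and y are minimal nonzero elements and x·y ≠ 0, then x·y is a minimal nonzero element. -/
/-- An inverse semigroup: a semigroup in which every element `a` has a unique
inverse `a⁻¹` satisfying `a * a⁻¹ * a = a` and `a⁻¹ * a * a⁻¹ = a⁻¹`. -/
class InvSemigroup (S : Type*) extends Semigroup S, Inv S where
  mul_inv_mul : ∀ a : S, a * a⁻¹ * a = a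
  inv_mul_inv : ∀ a : S, a⁻¹ * a * a⁻¹ = a⁻¹
  inv_unique : ∀ a x : S, a * x * a = a → x * a * x = x → x = a⁻¹

/-- The natural order on an inverse semigroup. -/
def nle {S : Type*} [InvSemigroup S] (x y : S) : Prop := x * x⁻¹ = x * y⁻¹

/-- An inverse semigroup with a zero element. -/
class InvSemigroupWithZero (S : Type*) extends InvSemigroup S, Zero S where
  zero_mul : ∀ a : S, 0 * a = 0
  mul_zero : ∀ a : S, a * 0 = 0

/-- Minimal among nonzero elements w.r.t. the natural order. -/
def MinNZ {S : Type*} [InvSemigroupWithZero S] (m : S) : Prop :=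
  m ≠ 0 ∧ ∀ z : S, z ≠ 0 → nle z m → z = m

section Aux
open InvSemigroup

variable {S : Type*} [InvSemigroup S]

lemma my_inv_inv (a : S) : a⁻¹⁻¹ = a :=
  (inv_unique a⁻¹ a (inv_mul_inv a) (mul_inv_mul a)).symm

lemma my_mul_inv_idem (a : S) : (a * a⁻¹) * (a * a⁻¹) = a * a⁻¹ := by
  have h : (a * a⁻¹) * (a * a⁻¹) = a * (a⁻¹ * a * a⁻¹) := by simp only [mul_assoc]
  rw [h, inv_mul_inv]

lemma my_inv_mul_idem (a : S) : (a⁻¹ * a) * (a⁻¹ * a) = a⁻¹ * a := by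
  rw [mul_assoc, ← mul_assoc a, mul_inv_mul]

lemma my_idem_inv {e : S} (he : e * e = e) : e⁻¹ = e :=
  (inv_unique e e (by rw [he, he]) (by rw [he, he])).symm

lemma my_idem_comm {e f : S} (he : e * e = e) (hf : f * f = f) :
    e * f = f * e := by
  have he' : ∀ x : S, e * (e * x) = e * x := fun x => by rw [← mul_assoc, he]
  have hf' : ∀ x : S, f * (f * x) = f * x := fun x => by rw [← mul_assoc, hf]
  obtain ⟨g, hg⟩ : ∃ g : S, g = (e * f)⁻¹ := ⟨_, rfl⟩
  have h2 : g * (e * f) * g = g := by rw [hg]; exact inv_mul_inv (e * f)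
  have hA : f * g * e = g := by
    have hA0 : f * g * e = (e * f)⁻¹ := by
      refine inv_unique (e * f) (f * g * e) ?_ ?_
      · have h : (e * f) * (f * g * e) * (e * f) = (e * f) * g * (e * f) := by
          simp only [mul_assoc, he', hf', he, hf]
        rw [h, hg]; exact mul_inv_mul (e * f)
      · have h : (f * g * e) * (e * f) * (f * g * e) = f * (g * (e * f) * g) * e := by
          simp only [mul_assoc, he', hf', he, hf]
        rw [h, h2]
    exact hA0.trans hg.symm
  have hgidem : g * g = g := by
    calc g * g = (f * g * e) * (f * g * e) := by rw [hA]
      _ = f * (g * (e * f) * g) * e := by simp only [mul_assoc]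
      _ = f * g * e := by rw [h2]
      _ = g := hA
  have hefg : e * f = g := by
    have h := my_idem_inv hgidem
    rw [hg] at h
    rw [my_inv_inv] at h
    rw [hg]; exact h
  have hef : (e * f) * (e * f) = e * f := by rw [hefg]; exact hgidem
  have hfe : (f * e) * (f * e) = f * e := by
    obtain ⟨g', hg'⟩ : ∃ g' : S, g' = (f * e)⁻¹ := ⟨_, rfl⟩
    have h2' : g' * (f * e) * g' = g' := by rw [hg']; exact inv_mul_inv (f * e)
    have hA' : e * g' * f = g' := by
      have hA0 : e * g' * f = (f * e)⁻¹ := by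
        refine inv_unique (f * e) (e * g' * f) ?_ ?_
        · have h : (f * e) * (e * g' * f) * (f * e) = (f * e) * g' * (f * e) := by
            simp only [mul_assoc, he', hf', he, hf]
          rw [h, hg']; exact mul_inv_mul (f * e)
        · have h : (e * g' * f) * (f * e) * (e * g' * f) = e * (g' * (f * e) * g') * f := by
            simp only [mul_assoc, he', hf', he, hf]
          rw [h, h2']
      exact hA0.trans hg'.symm
    have hgidem' : g' * g' = g' := by
      calc g' * g' = (e * g' * f) * (e * g' * f) := by rw [hA']
        _ = e * (g' * (f * e) * g') * f := by simp only [mul_assoc]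
        _ = e * g' * f := by rw [h2']
        _ = g' := hA'
    have h := my_idem_inv hgidem'
    rw [hg'] at h
    rw [my_inv_inv] at h
    rw [h, ← hg']; exact hgidem'
  have key : f * e = (e * f)⁻¹ := by
    refine inv_unique (e * f) (f * e) ?_ ?_
    · have h : (e * f) * (f * e) * (e * f) = (e * f) * (e * f) := by
        simp only [mul_assoc, he', hf', he, hf]
      rw [h, hef]
    · have h : (f * e) * (e * f) * (f * e) = (f * e) * (f * e) := by
        simp only [mul_assoc, he', hf', he, hf]
      rw [h, hfe]
  rw [hefg, hg, ← key]

lemma my_mul_inv_rev (a b : S) : (a * b)⁻¹ = b⁻¹ * a⁻¹ := by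
  have hcomm := my_idem_comm (my_mul_inv_idem b) (my_inv_mul_idem a)
  refine (inv_unique (a * b) (b⁻¹ * a⁻¹) ?_ ?_).symm
  · have : (a * b) * (b⁻¹ * a⁻¹) * (a * b) = a * ((b * b⁻¹) * (a⁻¹ * a)) * b := by
      simp only [mul_assoc]
    rw [this, hcomm]
    have : a * ((a⁻¹ * a) * (b * b⁻¹)) * b = (a * a⁻¹ * a) * (b * b⁻¹ * b) := by
      simp only [mul_assoc]
    rw [this, mul_inv_mul, mul_inv_mul]
  · have : (b⁻¹ * a⁻¹) * (a * b) * (b⁻¹ * a⁻¹) = b⁻¹ * ((a⁻¹ * a) * (b * b⁻¹)) * a⁻¹ := by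
      simp only [mul_assoc]
    rw [this, ← hcomm]
    have : b⁻¹ * ((b * b⁻¹) * (a⁻¹ * a)) * a⁻¹ = (b⁻¹ * b * b⁻¹) * (a⁻¹ * a * a⁻¹) := by
      simp only [mul_assoc]
    rw [this, inv_mul_inv, inv_mul_inv]

/-- From `nle z w` : `z = w * (z⁻¹ * z)`. -/
lemma my_nle_eq_right {z w : S} (h : nle z w) : w * (z⁻¹ * z) = z := by
  have h' : w * z⁻¹ = z * z⁻¹ := by
    have := congrArg (·⁻¹) h
    simp only [my_mul_inv_rev, my_inv_inv] at this
    exact this.symm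
  calc w * (z⁻¹ * z) = (w * z⁻¹) * z := by rw [mul_assoc]
    _ = (z * z⁻¹) * z := by rw [h']
    _ = z := mul_inv_mul z

lemma my_nle_mul_right {z w : S} (h : nle z w) : z * (w⁻¹ * w) = z := by
  have h1 : w * (z⁻¹ * z) = z := my_nle_eq_right h
  have hcomm := my_idem_comm (my_inv_mul_idem z) (my_inv_mul_idem w)
  calc z * (w⁻¹ * w) = w * (z⁻¹ * z) * (w⁻¹ * w) := by rw [h1]
    _ = w * ((z⁻¹ * z) * (w⁻¹ * w)) := by rw [mul_assoc]
    _ = w * ((w⁻¹ * w) * (z⁻¹ * z)) := by rw [hcomm]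
    _ = (w * w⁻¹ * w) * (z⁻¹ * z) := by simp only [mul_assoc]
    _ = w * (z⁻¹ * z) := by rw [mul_inv_mul]
    _ = z := h1

lemma my_nle_eq_left {z w : S} (h : nle z w) : z * z⁻¹ * w = z := by
  calc z * z⁻¹ * w = z * w⁻¹ * w := by rw [h]
    _ = z * (w⁻¹ * w) := by rw [mul_assoc]
    _ = z := my_nle_mul_right h

lemma my_nle_trans {z w v : S} (h1 : nle z w) (h2 : nle w v) : nle z v := by
  unfold nle at *
  have key : z * v⁻¹ = z * z⁻¹ := by
    calc z * v⁻¹ = z * (w⁻¹ * w) * v⁻¹ := by rw [my_nle_mul_right h1]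
      _ = z * w⁻¹ * (w * v⁻¹) := by simp only [mul_assoc]
      _ = z * w⁻¹ * (w * w⁻¹) := by rw [← h2]
      _ = z * (w⁻¹ * w) * w⁻¹ := by simp only [mul_assoc]
      _ = z * w⁻¹ := by rw [my_nle_mul_right h1]
      _ = z * z⁻¹ := h1.symm
  exact key.symm

lemma my_nle_mul_left {z w : S} (a : S) (h : nle z w) : nle (a * z) (a * w) := by
  unfold nle at *
  simp only [my_mul_inv_rev]
  calc a * z * (z⁻¹ * a⁻¹) = a * (z * z⁻¹) * a⁻¹ := by simp only [mul_assoc]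
    _ = a * (z * w⁻¹) * a⁻¹ := by rw [h]
    _ = a * z * (w⁻¹ * a⁻¹) := by simp only [mul_assoc]

lemma my_nle_idem_mul {e w : S} (he : e * e = e) : nle (e * w) w := by
  unfold nle
  have hcomm := my_idem_comm (my_mul_inv_idem w) he
  simp only [my_mul_inv_rev, my_idem_inv he]
  calc e * w * (w⁻¹ * e) = e * (w * w⁻¹) * e := by simp only [mul_assoc]
    _ = e * (e * (w * w⁻¹)) := by rw [mul_assoc, hcomm]
    _ = (e * e) * (w * w⁻¹) := by rw [mul_assoc]
    _ = e * (w * w⁻¹) := by rw [he]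
    _ = e * w * w⁻¹ := by rw [mul_assoc]

end Aux

/-- Minimal nonzero elements form an ideal: the product of two minimal nonzero
elements, when nonzero, is again minimal nonzero. -/
theorem stmt6 {S : Type*} [InvSemigroupWithZero S] (x y : S)
    (hx : MinNZ x) (hy : MinNZ y) (hxy : x * y ≠ 0) : MinNZ (x * y) := by
  obtain ⟨hx0, hxmin⟩ := hx
  obtain ⟨hy0, hymin⟩ := hy
  refine ⟨hxy, fun z hz0 hz => ?_⟩
  -- z = x * (x⁻¹ * z)
  have hz1 : (x * y) * (z⁻¹ * z) = z := my_nle_eq_right hz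
  have hxz : x * (x⁻¹ * z) = z := by
    calc x * (x⁻¹ * z) = x * (x⁻¹ * ((x * y) * (z⁻¹ * z))) := by rw [hz1]
      _ = (x * x⁻¹ * x) * (y * (z⁻¹ * z)) := by simp only [mul_assoc]
      _ = x * (y * (z⁻¹ * z)) := by rw [InvSemigroup.mul_inv_mul]
      _ = (x * y) * (z⁻¹ * z) := by rw [mul_assoc]
      _ = z := hz1
  have hxz0 : x⁻¹ * z ≠ 0 := by
    intro h
    apply hz0
    rw [← hxz, h, InvSemigroupWithZero.mul_zero]
  have h1 : nle (x⁻¹ * z) (x⁻¹ * (x * y)) := my_nle_mul_left x⁻¹ hz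
  have h2 : nle (x⁻¹ * (x * y)) y := by
    have := my_nle_idem_mul (w := y) (my_inv_mul_idem x)
    rwa [mul_assoc] at this
  have h3 : nle (x⁻¹ * z) y := my_nle_trans h1 h2
  have h4 : x⁻¹ * z = y := hymin _ hxz0 h3
  rw [← hxz, h4]
end

section
/- In an inverse semigroup with zero, if x and y are minimal nonzero elements and x·y ≠ 0, then x⁻¹·x = y·y⁻¹. Consequently the set of minimal nonzero elements, with multiplication restricted to pairs whose product is nonzero, satisfies cancellation: if x·y = x·z ≠ 0 for minimal nonzero x, y, z, then y = z. -/
namespace InvSemigroup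
variable {S : Type*} [InvSemigroup S]

lemma inv_invS (a : S) : a⁻¹⁻¹ = a :=
  (inv_unique a⁻¹ a (inv_mul_inv a) (mul_inv_mul a)).symm

lemma idem_inv {e : S} (h : e * e = e) : e⁻¹ = e :=
  (inv_unique e e (by rw [h, h]) (by rw [h, h])).symm

lemma mul_inv_idem (a : S) : (a * a⁻¹) * (a * a⁻¹) = a * a⁻¹ := by
  rw [mul_assoc, ← mul_assoc a⁻¹, inv_mul_inv]

lemma inv_mul_idem (a : S) : (a⁻¹ * a) * (a⁻¹ * a) = a⁻¹ * a := by
  rw [mul_assoc, ← mul_assoc a, mul_inv_mul]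

lemma idem_abs {e : S} (h : e * e = e) (t : S) : e * (e * t) = e * t := by
  rw [← mul_assoc, h]

lemma prod_idem_idem {e f : S} (he : e * e = e) (hf : f * f = f) :
    (e * f) * (e * f) = e * f := by
  set x := (e * f)⁻¹ with hx
  have hxa : e * (f * (x * (e * f))) = e * f := by
    have := mul_inv_mul (e * f); simp only [mul_assoc] at this; exact this
  have hxb : x * (e * (f * x)) = x := by
    have := inv_mul_inv (e * f); simp only [mul_assoc] at this; exact this
  have hxa' : ∀ t : S, e * (f * (x * (e * (f * t)))) = e * (f * t) := by
    intro t
    calc e * (f * (x * (e * (f * t)))) = (e * (f * (x * (e * f)))) * t := by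
          simp only [mul_assoc]
      _ = e * (f * t) := by rw [hxa, mul_assoc]
  have hxb' : ∀ t : S, x * (e * (f * (x * t))) = x * t := by
    intro t
    calc x * (e * (f * (x * t))) = (x * (e * (f * x))) * t := by
          simp only [mul_assoc]
      _ = x * t := by rw [hxb]
  have key : f * x * e = x := by
    rw [hx]
    apply inv_unique
    · show e * f * (f * x * e) * (e * f) = e * f
      simp only [mul_assoc, idem_abs he, idem_abs hf]
      exact hxa
    · show f * x * e * (e * f) * (f * x * e) = f * x * e
      simp only [mul_assoc, idem_abs he, idem_abs hf, hxb']
  have xidem : x * x = x := by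
    conv_lhs => rw [← key]
    simp only [mul_assoc, he, hf, idem_abs he, idem_abs hf]
    rw [← key]
    simp only [mul_assoc, he, hf, idem_abs he, idem_abs hf, hxb']
  have h2 : x⁻¹ = x := idem_inv xidem
  rw [hx, inv_invS] at h2
  rw [h2]; exact xidem

lemma idem_comm {e f : S} (he : e * e = e) (hf : f * f = f) :
    e * f = f * e := by
  have hef := prod_idem_idem he hf
  have hfe := prod_idem_idem hf he
  have h1 : f * e = (e * f)⁻¹ := by
    apply inv_unique
    · show e * f * (f * e) * (e * f) = e * f
      simp only [mul_assoc, he, hf, idem_abs he, idem_abs hf]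
      have := hef; simp only [mul_assoc] at this; exact this
    · show f * e * (e * f) * (f * e) = f * e
      simp only [mul_assoc, he, hf, idem_abs he, idem_abs hf]
      have := hfe; simp only [mul_assoc] at this; exact this
  rw [h1, idem_inv hef]

lemma mul_invS (a b : S) : (a * b)⁻¹ = b⁻¹ * a⁻¹ := by
  symm
  apply inv_unique
  · show a * b * (b⁻¹ * a⁻¹) * (a * b) = a * b
    have h : b * (b⁻¹ * (a⁻¹ * (a * b))) = a⁻¹ * (a * (b * (b⁻¹ * b))) := by
      have := idem_comm (mul_inv_idem b) (inv_mul_idem a)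
      calc b * (b⁻¹ * (a⁻¹ * (a * b))) = ((b * b⁻¹) * (a⁻¹ * a)) * b := by
            simp only [mul_assoc]
        _ = ((a⁻¹ * a) * (b * b⁻¹)) * b := by rw [this]
        _ = a⁻¹ * (a * (b * (b⁻¹ * b))) := by simp only [mul_assoc]
    simp only [mul_assoc]
    rw [h]
    have hb : b * (b⁻¹ * b) = b := by rw [← mul_assoc, mul_inv_mul]
    have ha : a * (a⁻¹ * a) = a := by rw [← mul_assoc, mul_inv_mul]
    rw [hb, ← mul_assoc, ← mul_assoc, mul_inv_mul]
  · show b⁻¹ * a⁻¹ * (a * b) * (b⁻¹ * a⁻¹) = b⁻¹ * a⁻¹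
    have h : a⁻¹ * (a * (b * (b⁻¹ * a⁻¹))) = b * (b⁻¹ * (a⁻¹ * (a * a⁻¹))) := by
      have := idem_comm (inv_mul_idem a) (mul_inv_idem b)
      calc a⁻¹ * (a * (b * (b⁻¹ * a⁻¹))) = ((a⁻¹ * a) * (b * b⁻¹)) * a⁻¹ := by
            simp only [mul_assoc]
        _ = ((b * b⁻¹) * (a⁻¹ * a)) * a⁻¹ := by rw [this]
        _ = b * (b⁻¹ * (a⁻¹ * (a * a⁻¹))) := by simp only [mul_assoc]
    simp only [mul_assoc]
    rw [h]
    have ha : a⁻¹ * (a * a⁻¹) = a⁻¹ := by rw [← mul_assoc, inv_mul_inv]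
    have hb : b⁻¹ * (b * b⁻¹) = b⁻¹ := by rw [← mul_assoc, inv_mul_inv]
    rw [ha, ← mul_assoc, ← mul_assoc, inv_mul_inv]

end InvSemigroup

open InvSemigroup

/-- For minimal nonzero elements, composability `x * y ≠ 0` forces
`d x = r y`, and consequently cancellation holds among minimal nonzero
elements. -/
theorem stmt7 {S : Type*} [InvSemigroupWithZero S] :
    (∀ x y : S, MinNZ x → MinNZ y → x * y ≠ 0 → x⁻¹ * x = y * y⁻¹) ∧
    (∀ x y z : S, MinNZ x → MinNZ y → MinNZ z →
      x * y = x * z → x * y ≠ 0 → y = z) := by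
  have main : ∀ x y : S, MinNZ x → MinNZ y → x * y ≠ 0 → x⁻¹ * x = y * y⁻¹ := by
    intro x y hx hy hxy
    have he : (x⁻¹ * x) * (x⁻¹ * x) = x⁻¹ * x := inv_mul_idem x
    have hf : (y * y⁻¹) * (y * y⁻¹) = y * y⁻¹ := mul_inv_idem y
    -- step 1 : x * (y * y⁻¹) = x
    have hainv : (x * (y * y⁻¹))⁻¹ = (y * y⁻¹) * x⁻¹ := by
      rw [mul_invS, idem_inv hf]
    have hale : nle (x * (y * y⁻¹)) x := by
      show (x * (y * y⁻¹)) * (x * (y * y⁻¹))⁻¹ = (x * (y * y⁻¹)) * x⁻¹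
      rw [hainv]
      calc (x * (y * y⁻¹)) * ((y * y⁻¹) * x⁻¹)
          = x * (((y * y⁻¹) * (y * y⁻¹)) * x⁻¹) := by simp only [mul_assoc]
        _ = x * ((y * y⁻¹) * x⁻¹) := by rw [hf]
        _ = (x * (y * y⁻¹)) * x⁻¹ := by simp only [mul_assoc]
    have hamul : (x * (y * y⁻¹)) * y = x * y := by
      rw [mul_assoc, mul_inv_mul]
    have haz : x * (y * y⁻¹) ≠ 0 := by
      intro h0
      apply hxy
      rw [← hamul, h0, InvSemigroupWithZero.zero_mul]
    have haeq : x * (y * y⁻¹) = x := hx.2 _ haz hale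
    have he_f : (x⁻¹ * x) * (y * y⁻¹) = x⁻¹ * x := by
      have h : x⁻¹ * (x * (y * y⁻¹)) = x⁻¹ * x := by rw [haeq]
      rw [← mul_assoc] at h
      rw [mul_assoc]; rw [← mul_assoc]; exact h
    -- step 2 : (x⁻¹ * x) * y = y
    have hbinv : ((x⁻¹ * x) * y)⁻¹ = y⁻¹ * (x⁻¹ * x) := by
      rw [mul_invS, idem_inv he]
    have hble : nle ((x⁻¹ * x) * y) y := by
      show ((x⁻¹ * x) * y) * ((x⁻¹ * x) * y)⁻¹ = ((x⁻¹ * x) * y) * y⁻¹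
      rw [hbinv]
      calc ((x⁻¹ * x) * y) * (y⁻¹ * (x⁻¹ * x))
          = ((x⁻¹ * x) * (y * y⁻¹)) * (x⁻¹ * x) := by simp only [mul_assoc]
        _ = ((y * y⁻¹) * (x⁻¹ * x)) * (x⁻¹ * x) := by rw [idem_comm he hf]
        _ = (y * y⁻¹) * ((x⁻¹ * x) * (x⁻¹ * x)) := by simp only [mul_assoc]
        _ = (y * y⁻¹) * (x⁻¹ * x) := by rw [he]
        _ = (x⁻¹ * x) * (y * y⁻¹) := (idem_comm he hf).symm
        _ = ((x⁻¹ * x) * y) * y⁻¹ := by simp only [mul_assoc]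
    have hbmul : x * ((x⁻¹ * x) * y) = x * y := by
      rw [← mul_assoc, ← mul_assoc, mul_inv_mul]
    have hbz : (x⁻¹ * x) * y ≠ 0 := by
      intro h0
      apply hxy
      rw [← hbmul, h0, InvSemigroupWithZero.mul_zero]
    have hbeq : (x⁻¹ * x) * y = y := hy.2 _ hbz hble
    have hf_e : (x⁻¹ * x) * (y * y⁻¹) = y * y⁻¹ := by
      rw [← mul_assoc, hbeq]
    exact he_f.symm.trans hf_e
  refine ⟨main, ?_⟩
  intro x y z hx hy hz heq hne
  have h1 := main x y hx hy hne
  have h2 := main x z hx hz (heq ▸ hne)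
  calc y = (y * y⁻¹) * y := (mul_inv_mul y).symm
    _ = (x⁻¹ * x) * y := by rw [h1]
    _ = x⁻¹ * (x * y) := mul_assoc _ _ _
    _ = x⁻¹ * (x * z) := by rw [heq]
    _ = (x⁻¹ * x) * z := (mul_assoc _ _ _).symm
    _ = (z * z⁻¹) * z := by rw [h2]
    _ = z := mul_inv_mul z
end

section
/- Let S be an inverse semigroup and S↓ℕ the set of decreasing sequences with preorder (x) ≼ (y) iff ∀n ∃m: xₘ ≤ yₙ. Pointwise multiplication and pointwise inversion descend to the quotient of S↓ℕ by the equivalence (x) ∼ (y) iff (x) ≼ (y) and (y) ≼ (x), making it an inverse semigroup; that is, if (x) ∼ (x') and (y) ∼ (y') then the pointwise products satisfy (xₙ·yₙ) ∼ (x'ₙ·y'ₙ), and (x) ∼ (y) iff (xₙ⁻¹) ∼ (yₙ⁻¹). -/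
/-- The pre-order on decreasing sequences. -/
def seqPre {S : Type*} [InvSemigroup S] (x y : ℕ → S) : Prop :=
  ∀ n, ∃ m, nle (x m) (y n)

/-- Mutual domination of decreasing sequences. -/
def seqEquiv {S : Type*} [InvSemigroup S] (x y : ℕ → S) : Prop :=
  seqPre x y ∧ seqPre y x

namespace ISAux
variable {S : Type*} [InvSemigroup S]

lemma mim (a : S) : a * a⁻¹ * a = a := InvSemigroup.mul_inv_mul a
lemma imi (a : S) : a⁻¹ * a * a⁻¹ = a⁻¹ := InvSemigroup.inv_mul_inv a

lemma iinv (a : S) : a⁻¹⁻¹ = a := (InvSemigroup.inv_unique a⁻¹ a (imi a) (mim a)).symm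

def IsIdem (e : S) : Prop := e * e = e

lemma idem_inv {e : S} (he : IsIdem e) : e⁻¹ = e :=
  (InvSemigroup.inv_unique e e (by rw [IsIdem] at he; rw [he, he]) (by rw [IsIdem] at he; rw [he, he])).symm

lemma idem_mul_inv (a : S) : IsIdem (a * a⁻¹) := by
  show a * a⁻¹ * (a * a⁻¹) = a * a⁻¹
  rw [← mul_assoc, mim]

lemma idem_inv_mul (a : S) : IsIdem (a⁻¹ * a) := by
  show a⁻¹ * a * (a⁻¹ * a) = a⁻¹ * a
  rw [← mul_assoc, imi]

lemma pull {x y z : S} (h : x * y = z) (t : S) : x * (y * t) = z * t := by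
  rw [← mul_assoc, h]

lemma mimx (a t : S) : a * (a⁻¹ * (a * t)) = a * t := by
  have h := pull (mim a) t; rwa [mul_assoc] at h

lemma imix (a t : S) : a⁻¹ * (a * (a⁻¹ * t)) = a⁻¹ * t := by
  have h := pull (imi a) t; rwa [mul_assoc] at h

lemma aux_idem {e f : S} (he : IsIdem e) (hf : IsIdem f) :
    IsIdem (e * f) ∧ e * f = (e * f)⁻¹ := by
  have hex := pull he
  have hfx := pull hf
  have key1 : f * ((e * f)⁻¹ * e) = (e * f)⁻¹ := by
    apply InvSemigroup.inv_unique (e * f)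
    · have hm := mim (e * f)
      simp only [mul_assoc] at hm ⊢
      rw [hfx, hex]; exact hm
    · have hi := imix (e * f) e
      simp only [mul_assoc] at hi ⊢
      rw [hex, hfx, hi]
  have key2 : IsIdem (e * f)⁻¹ := by
    show (e * f)⁻¹ * (e * f)⁻¹ = (e * f)⁻¹
    conv_lhs => rw [← key1]
    have hi := imix (e * f) e
    simp only [mul_assoc] at hi ⊢
    rw [hi]
    have := key1; exact this
  have key3 : e * f = (e * f)⁻¹ := by
    conv_lhs => rw [← iinv (e * f)]
    rw [idem_inv key2]
  refine ⟨?_, key3⟩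
  have key2' : (e * f)⁻¹ * (e * f)⁻¹ = (e * f)⁻¹ := key2
  show (e * f) * (e * f) = e * f
  conv_lhs => rw [key3]
  rw [key2', ← key3]

lemma idem_comm {e f : S} (he : IsIdem e) (hf : IsIdem f) : e * f = f * e := by
  obtain ⟨ief, kef⟩ := aux_idem he hf
  obtain ⟨ife, _⟩ := aux_idem hf he
  have hex := pull he
  have hfx := pull hf
  have h : f * e = (e * f)⁻¹ := by
    apply InvSemigroup.inv_unique (e * f)
    · have h1 : (e * f) * (e * f) = e * f := ief
      simp only [mul_assoc] at h1 ⊢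
      rw [hfx, hex]; exact h1
    · have h1 : (f * e) * (f * e) = f * e := ife
      simp only [mul_assoc] at h1 ⊢
      rw [hex, hfx]; exact h1
  rw [kef, ← h]

lemma idem_mul_idem {e f : S} (he : IsIdem e) (hf : IsIdem f) : IsIdem (e * f) :=
  (aux_idem he hf).1

lemma mul_inv_rev (a b : S) : (a * b)⁻¹ = b⁻¹ * a⁻¹ := by
  symm
  apply InvSemigroup.inv_unique (a * b)
  · calc (a * b) * (b⁻¹ * a⁻¹) * (a * b)
        = a * ((b * b⁻¹) * (a⁻¹ * a)) * b := by simp only [mul_assoc]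
      _ = a * ((a⁻¹ * a) * (b * b⁻¹)) * b := by
          rw [idem_comm (idem_mul_inv b) (idem_inv_mul a)]
      _ = (a * a⁻¹ * a) * (b * b⁻¹ * b) := by simp only [mul_assoc]
      _ = a * b := by rw [mim, mim]
  · calc (b⁻¹ * a⁻¹) * (a * b) * (b⁻¹ * a⁻¹)
        = b⁻¹ * ((a⁻¹ * a) * (b * b⁻¹)) * a⁻¹ := by simp only [mul_assoc]
      _ = b⁻¹ * ((b * b⁻¹) * (a⁻¹ * a)) * a⁻¹ := by
          rw [idem_comm (idem_inv_mul a) (idem_mul_inv b)]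
      _ = (b⁻¹ * b * b⁻¹) * (a⁻¹ * a * a⁻¹) := by simp only [mul_assoc]
      _ = b⁻¹ * a⁻¹ := by rw [imi, imi]

lemma nle_iff {a b : S} : nle a b ↔ ∃ e : S, IsIdem e ∧ a = e * b := by
  constructor
  · intro h
    rw [nle] at h
    have h2 : a * a⁻¹ = b * a⁻¹ := by
      have := congrArg Inv.inv h
      rwa [mul_inv_rev, mul_inv_rev, iinv, iinv] at this
    refine ⟨a * a⁻¹, idem_mul_inv a, ?_⟩
    have hu : a⁻¹ = (a * a⁻¹ * b)⁻¹ := by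
      apply InvSemigroup.inv_unique
      · -- (a*a⁻¹*b) * a⁻¹ * (a*a⁻¹*b) = a*a⁻¹*b
        have h2n : ∀ t : S, b * (a⁻¹ * t) = a * (a⁻¹ * t) := fun t => by
          rw [← mul_assoc, ← mul_assoc, ← h2]
        simp only [mul_assoc]
        rw [h2n, mimx, mimx]
      · -- a⁻¹ * (a*a⁻¹*b) * a⁻¹ = a⁻¹
        simp only [mul_assoc]
        rw [show b * a⁻¹ = a * a⁻¹ from h2.symm, imix]
        have := imi a; simp only [mul_assoc] at this; exact this
    have := congrArg Inv.inv hu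
    rwa [iinv, iinv] at this
  · rintro ⟨e, he, rfl⟩
    show (e * b) * (e * b)⁻¹ = (e * b) * b⁻¹
    rw [mul_inv_rev, idem_inv he]
    calc e * b * (b⁻¹ * e) = e * ((b * b⁻¹) * e) := by simp only [mul_assoc]
      _ = e * (e * (b * b⁻¹)) := by rw [idem_comm (idem_mul_inv b) he]
      _ = (e * e) * (b * b⁻¹) := by simp only [mul_assoc]
      _ = e * (b * b⁻¹) := by rw [show e * e = e from he]
      _ = e * b * b⁻¹ := by rw [mul_assoc]

lemma nle_refl (a : S) : nle a a := rfl

lemma nle_trans {a b c : S} (h1 : nle a b) (h2 : nle b c) : nle a c := by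
  rw [nle_iff] at h1 h2 ⊢
  obtain ⟨e, he, rfl⟩ := h1
  obtain ⟨f, hf, rfl⟩ := h2
  exact ⟨e * f, idem_mul_idem he hf, by rw [mul_assoc]⟩

lemma nle_mul {a b c d : S} (h1 : nle a b) (h2 : nle c d) : nle (a * c) (b * d) := by
  rw [nle_iff] at h1 h2 ⊢
  obtain ⟨e, he, rfl⟩ := h1
  obtain ⟨f, hf, rfl⟩ := h2
  have hg : IsIdem (b * (f * b⁻¹)) := by
    show b * (f * b⁻¹) * (b * (f * b⁻¹)) = b * (f * b⁻¹)
    calc b * (f * b⁻¹) * (b * (f * b⁻¹))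
        = b * ((f * (b⁻¹ * b)) * (f * b⁻¹)) := by simp only [mul_assoc]
      _ = b * (((b⁻¹ * b) * f) * (f * b⁻¹)) := by rw [idem_comm hf (idem_inv_mul b)]
      _ = (b * b⁻¹ * b) * (f * f * b⁻¹) := by simp only [mul_assoc]
      _ = b * (f * b⁻¹) := by rw [mim, show f * f = f from hf]
  refine ⟨e * (b * (f * b⁻¹)), idem_mul_idem he hg, ?_⟩
  symm
  calc e * (b * (f * b⁻¹)) * (b * d)
      = e * (b * ((f * (b⁻¹ * b)) * d)) := by simp only [mul_assoc]
    _ = e * (b * (((b⁻¹ * b) * f) * d)) := by rw [idem_comm hf (idem_inv_mul b)]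
    _ = e * ((b * b⁻¹ * b) * (f * d)) := by simp only [mul_assoc]
    _ = (e * b) * (f * d) := by rw [mim, mul_assoc]

lemma nle_inv {a b : S} (h : nle a b) : nle a⁻¹ b⁻¹ := by
  rw [nle_iff] at h ⊢
  obtain ⟨e, he, rfl⟩ := h
  have hg : IsIdem (b⁻¹ * (e * b)) := by
    show b⁻¹ * (e * b) * (b⁻¹ * (e * b)) = b⁻¹ * (e * b)
    calc b⁻¹ * (e * b) * (b⁻¹ * (e * b))
        = b⁻¹ * ((e * (b * b⁻¹)) * (e * b)) := by simp only [mul_assoc]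
      _ = b⁻¹ * (((b * b⁻¹) * e) * (e * b)) := by rw [idem_comm he (idem_mul_inv b)]
      _ = (b⁻¹ * b * b⁻¹) * (e * e * b) := by simp only [mul_assoc]
      _ = b⁻¹ * (e * b) := by rw [imi, show e * e = e from he]
  refine ⟨b⁻¹ * (e * b), hg, ?_⟩
  rw [mul_inv_rev, idem_inv he]
  calc b⁻¹ * e = (b⁻¹ * b * b⁻¹) * e := by rw [imi]
    _ = b⁻¹ * ((b * b⁻¹) * e) := by simp only [mul_assoc]
    _ = b⁻¹ * (e * (b * b⁻¹)) := by rw [idem_comm (idem_mul_inv b) he]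
    _ = b⁻¹ * (e * b) * b⁻¹ := by simp only [mul_assoc]

lemma nle_chain {x : ℕ → S} (hx : ∀ n, nle (x (n + 1)) (x n)) {k m : ℕ} (h : k ≤ m) :
    nle (x m) (x k) := by
  induction m, h using Nat.le_induction with
  | base => exact nle_refl _
  | succ m hm ih => exact nle_trans (hx m) ih

end ISAux

open ISAux in
/-- Pointwise multiplication and inversion of decreasing sequences descend to
the quotient by mutual domination, making it an inverse semigroup: the
pointwise product of decreasing sequences is decreasing, products of
equivalent sequences are equivalent, and equivalence is compatible with
pointwise inversion. -/
theorem stmt15 {S : Type*} [InvSemigroup S] (x x' y y' : ℕ → S)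
    (hx : ∀ n, nle (x (n + 1)) (x n)) (hx' : ∀ n, nle (x' (n + 1)) (x' n))
    (hy : ∀ n, nle (y (n + 1)) (y n)) (hy' : ∀ n, nle (y' (n + 1)) (y' n)) :
    (∀ n, nle (x (n + 1) * y (n + 1)) (x n * y n)) ∧
    (seqEquiv x x' → seqEquiv y y' →
      seqEquiv (fun n => x n * y n) (fun n => x' n * y' n)) ∧
    (seqEquiv x y ↔ seqEquiv (fun n => (x n)⁻¹) (fun n => (y n)⁻¹)) := by
  refine ⟨fun n => nle_mul (hx n) (hy n), ?_, ?_⟩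
  · rintro ⟨hxx', hx'x⟩ ⟨hyy', hy'y⟩
    constructor
    · intro n
      obtain ⟨m1, hm1⟩ := hxx' n
      obtain ⟨m2, hm2⟩ := hyy' n
      refine ⟨max m1 m2, nle_mul ?_ ?_⟩
      · exact nle_trans (nle_chain hx (le_max_left m1 m2)) hm1
      · exact nle_trans (nle_chain hy (le_max_right m1 m2)) hm2
    · intro n
      obtain ⟨m1, hm1⟩ := hx'x n
      obtain ⟨m2, hm2⟩ := hy'y n
      refine ⟨max m1 m2, nle_mul ?_ ?_⟩
      · exact nle_trans (nle_chain hx' (le_max_left m1 m2)) hm1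
      · exact nle_trans (nle_chain hy' (le_max_right m1 m2)) hm2
  · constructor
    · rintro ⟨h1, h2⟩
      exact ⟨fun n => (h1 n).imp fun m hm => nle_inv hm,
             fun n => (h2 n).imp fun m hm => nle_inv hm⟩
    · rintro ⟨h1, h2⟩
      refine ⟨fun n => ?_, fun n => ?_⟩
      · obtain ⟨m, hm⟩ := h1 n
        have := nle_inv hm
        rw [iinv, iinv] at this
        exact ⟨m, this⟩
      · obtain ⟨m, hm⟩ := h2 n
        have := nle_inv hm
        rw [iinv, iinv] at this
        exact ⟨m, this⟩
end
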